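/- arXiv:1808.07661 — 5 statements merged into one kernel-verified Lean document; each statement's English description precedes it below -/
import Mathlib

section
/- Let μ be a Radon measure on ℝⁿ, x ∈ ℝⁿ, r > 0, and let y ∈ B(x,r/2) and s > 0 with B(y,2s) ⊂ B(x,r). Let L be an affine d-plane in ℝⁿ, c ≥ 0, and set ℒ := c·H^d|_L. If F_{B(x,r)}(μ,ℒ) < s·μ(B(y,s)), then L ∩ B(y,2s) ≠ ∅. -/
/-!
If `L` misses `B(y,2s)`, the tent `z ↦ (2s - |z - y|)₊` is 1-Lipschitz, supported in
`B(y,2s) ⊆ B(x,r)` and vanishes on `L`, so its `ℒ`-integral is `0` while its `μ`-integral is at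
least `s·μ(B(y,s))`; hence `F_{B(x,r)}(μ,ℒ) ≥ s·μ(B(y,s))`. For this to be a bound on a genuine
supremum, note that a 1-Lipschitz function vanishing off `B(x,r)` is bounded by `2r` and that both
measures are finite on `B(x,r)`, for `ℒ` because `H^d` is finite on compact pieces of a `d`-plane.
-/

open MeasureTheory Metric Set
open scoped ENNReal NNReal

noncomputable section

/-- `F_B(σ,ν)`: sup over 1-Lipschitz functions supported in `B` of `|∫φ dσ − ∫φ dν|`. -/
def FB {n : ℕ} (B : Set (EuclideanSpace ℝ (Fin n)))
    (σ ν : Measure (EuclideanSpace ℝ (Fin n))) : ℝ :=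
  sSup { t : ℝ | ∃ φ : EuclideanSpace ℝ (Fin n) → ℝ,
    LipschitzWith 1 φ ∧ Function.support φ ⊆ B ∧
    t = |(∫ y, φ y ∂σ) - (∫ y, φ y ∂ν)| }

/-- An affine `d`-plane: a nonempty affine subspace whose direction has dimension `d`. -/
def IsAffineDPlane {n : ℕ} (d : ℕ)
    (L : AffineSubspace ℝ (EuclideanSpace ℝ (Fin n))) : Prop :=
  (L : Set (EuclideanSpace ℝ (Fin n))).Nonempty ∧ Module.finrank ℝ L.direction = d

/-- The coefficient `α_μ^d(x,r)`. -/
def alphaCoef {n : ℕ} (d : ℕ) (μ : Measure (EuclideanSpace ℝ (Fin n)))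
    (x : EuclideanSpace ℝ (Fin n)) (r : ℝ) : ℝ :=
  (1 / (r * (μ (ball x r)).toReal)) *
    sInf { t : ℝ | ∃ (c : ℝ) (L : AffineSubspace ℝ (EuclideanSpace ℝ (Fin n))),
      0 ≤ c ∧ IsAffineDPlane d L ∧
      t = FB (ball x r) μ
        ((ENNReal.ofReal c) • (μH[(d:ℝ)]).restrict (L : Set (EuclideanSpace ℝ (Fin n)))) }

section

variable {E : Type*} [NormedAddCommGroup E] [InnerProductSpace ℝ E] [FiniteDimensional ℝ E]
  [MeasurableSpace E] [BorelSpace E]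

theorem AffineSubspace.hausdorffMeasure_inter_lt_top (L : AffineSubspace ℝ E) {K : Set E}
    (hK : IsCompact K) : μH[Module.finrank ℝ L.direction] ((L : Set E) ∩ K) < ∞ := by
  rcases (L : Set E).eq_empty_or_nonempty with hL | ⟨p, hp⟩
  · simp [hL]
  set f : L.direction → E := fun v => (v : E) + p
  have hf : Isometry f := (IsometryEquiv.addRight p).isometry.comp isometry_subtype_coe
  have hrange : range f = L := by
    ext z
    refine ⟨?_, fun hz => ⟨⟨z - p, L.vsub_mem_direction hz hp⟩, sub_add_cancel z p⟩⟩
    rintro ⟨v, rfl⟩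
    exact L.vadd_mem_of_mem_direction v.2 hp
  rw [← hrange, ← image_preimage_eq_range_inter,
    hf.hausdorffMeasure_image (Or.inl (by positivity))]
  exact (hf.isClosedEmbedding.isCompact_preimage hK).measure_lt_top

end

section

variable {E : Type*} [NormedAddCommGroup E] [NormedSpace ℝ E] [Nontrivial E]

theorem abs_le_of_lipschitzWith_one_of_support_subset_ball {φ : E → ℝ} (hφ : LipschitzWith 1 φ)
    {x : E} {r : ℝ} (hr : 0 ≤ r) (hsupp : Function.support φ ⊆ ball x r) (z : E) :
    |φ z| ≤ 2 * r := by
  by_cases hz : z ∈ ball x r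
  · obtain ⟨w, hw⟩ := (NormedSpace.sphere_nonempty (x := x)).2 hr
    have hφw : φ w = 0 := Function.notMem_support.1 fun h => (hsupp h).ne hw
    calc |φ z| = dist (φ z) (φ w) := by rw [Real.dist_eq, hφw, sub_zero]
      _ ≤ dist z w := by simpa using hφ.dist_le_mul z w
      _ ≤ dist z x + dist x w := dist_triangle z x w
      _ ≤ 2 * r := by rw [mem_sphere'.1 hw]; linarith [mem_ball.1 hz]
  · rw [Function.notMem_support.1 fun h => hz (hsupp h), abs_zero]
    positivity

variable [MeasurableSpace E]

theorem abs_integral_le_of_lipschitzWith_one_of_support_subset_ball {σ : Measure E}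
    {φ : E → ℝ} (hφ : LipschitzWith 1 φ) {x : E} {r : ℝ} (hr : 0 ≤ r)
    (hsupp : Function.support φ ⊆ ball x r) (hσ : σ (ball x r) ≠ ∞) :
    |∫ z, φ z ∂σ| ≤ 2 * r * σ.real (ball x r) := by
  rw [← setIntegral_eq_integral_of_forall_compl_eq_zero
    fun z hz => Function.notMem_support.1 fun h => hz (hsupp h)]
  exact norm_setIntegral_le_of_norm_le_const (f := φ) hσ.lt_top
    fun z _ => abs_le_of_lipschitzWith_one_of_support_subset_ball hφ hr hsupp z

end

/-- `FB` is an `sSup` of reals, hence junk (`0`) unless the set is bounded above: this is what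
`Nontrivial` and the finiteness of `σ`, `ν` on the ball provide. -/
theorem abs_integral_sub_le_FB {n : ℕ} [Nontrivial (EuclideanSpace ℝ (Fin n))]
    {σ ν : Measure (EuclideanSpace ℝ (Fin n))} {x : EuclideanSpace ℝ (Fin n)} {r : ℝ}
    (hr : 0 ≤ r) (hσ : σ (ball x r) ≠ ∞) (hν : ν (ball x r) ≠ ∞)
    {φ : EuclideanSpace ℝ (Fin n) → ℝ} (hφ : LipschitzWith 1 φ)
    (hsupp : Function.support φ ⊆ ball x r) :
    |(∫ z, φ z ∂σ) - ∫ z, φ z ∂ν| ≤ FB (ball x r) σ ν := by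
  refine le_csSup ⟨2 * r * σ.real (ball x r) + 2 * r * ν.real (ball x r), ?_⟩ ⟨φ, hφ, hsupp, rfl⟩
  rintro _ ⟨ψ, hψ, hψsupp, rfl⟩
  exact (abs_sub _ _).trans <| add_le_add
    (abs_integral_le_of_lipschitzWith_one_of_support_subset_ball hψ hr hψsupp hσ)
    (abs_integral_le_of_lipschitzWith_one_of_support_subset_ball hψ hr hψsupp hν)

section

variable {X : Type*} [MetricSpace X]

def tent (y : X) (t : ℝ) (z : X) : ℝ := max (t - dist z y) 0

theorem lipschitzWith_one_tent (y : X) (t : ℝ) : LipschitzWith 1 (tent y t) := by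
  unfold tent
  simpa using ((LipschitzWith.const t).sub (LipschitzWith.dist_left y)).max_const 0

theorem tent_nonneg (y : X) (t : ℝ) (z : X) : 0 ≤ tent y t z := le_max_right _ _

theorem support_tent_subset (y : X) (t : ℝ) : Function.support (tent y t) ⊆ ball y t := by
  intro z hz
  by_contra h
  rw [mem_ball, not_lt] at h
  exact hz (max_eq_right (by linarith))

variable [MeasurableSpace X]

theorem integral_tent_eq_zero {ν : Measure X} {y : X} {t : ℝ} (hν : ν (ball y t) = 0) :
    ∫ z, tent y t z ∂ν = 0 :=
  integral_eq_zero_of_ae <| measure_mono_null (support_tent_subset y t) hν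

theorem mul_measureReal_ball_le_integral_tent [OpensMeasurableSpace X] [ProperSpace X]
    (μ : Measure X) [IsLocallyFiniteMeasure μ] (y : X) {s t : ℝ} (hst : s ≤ t) :
    (t - s) * μ.real (ball y s) ≤ ∫ z, tent y t z ∂μ := by
  have htent : Integrable (tent y t) μ := by
    refine Continuous.integrable_of_hasCompactSupport ?_ ?_
    · exact (continuous_const.sub (continuous_id.dist continuous_const)).max continuous_const
    · exact HasCompactSupport.of_support_subset_isCompact (isCompact_closedBall y t)
        ((support_tent_subset y t).trans ball_subset_closedBall)
  calc (t - s) * μ.real (ball y s) = ∫ z, (ball y s).indicator (fun _ => t - s) z ∂μ := by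
        rw [integral_indicator_const _ measurableSet_ball, smul_eq_mul, mul_comm]
    _ ≤ ∫ z, tent y t z ∂μ := by
        refine integral_mono_of_nonneg (ae_of_all _ fun z => ?_) htent
          (ae_of_all _ fun z => ?_)
        · exact (ball y s).indicator_nonneg (fun _ _ => sub_nonneg.2 hst) z
        · by_cases hz : z ∈ ball y s
          · rw [indicator_of_mem hz]
            exact le_max_of_le_left (by linarith [mem_ball.1 hz])
          · rw [indicator_of_notMem hz]
            exact tent_nonneg y t z

end

theorem statement3_general (n d : ℕ)
    (μ : Measure (EuclideanSpace ℝ (Fin n))) [IsLocallyFiniteMeasure μ]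
    (x y : EuclideanSpace ℝ (Fin n)) (r s : ℝ) (hr : 0 < r) (hs : 0 < s)
    (hsub : ball y (2 * s) ⊆ ball x r)
    (L : AffineSubspace ℝ (EuclideanSpace ℝ (Fin n))) (hL : IsAffineDPlane d L)
    (c : ℝ)
    (hF : FB (ball x r) μ
        ((ENNReal.ofReal c) • (μH[(d:ℝ)]).restrict (L : Set (EuclideanSpace ℝ (Fin n))))
      < s * (μ (ball y s)).toReal) :
    ((L : Set (EuclideanSpace ℝ (Fin n))) ∩ ball y (2 * s)).Nonempty := by
  obtain ⟨⟨p, hp⟩, hdim⟩ := hL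
  rcases subsingleton_or_nontrivial (EuclideanSpace ℝ (Fin n)) with _ | _
  · exact ⟨p, hp, Subsingleton.elim y p ▸ mem_ball_self (by positivity)⟩
  by_contra hdisj
  set ν := (ENNReal.ofReal c) • (μH[(d:ℝ)]).restrict (L : Set (EuclideanSpace ℝ (Fin n)))
  have hν_ball : ν (ball y (2 * s)) = 0 := by
    rw [Measure.smul_apply, Measure.restrict_apply measurableSet_ball, inter_comm,
      not_nonempty_iff_eq_empty.1 hdisj, measure_empty, smul_zero]
  have hν_fin : ν (ball x r) ≠ ∞ := by
    rw [Measure.smul_apply, Measure.restrict_apply measurableSet_ball, smul_eq_mul, inter_comm,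
      ← hdim]
    refine (ENNReal.mul_lt_top ENNReal.ofReal_lt_top ?_).ne
    exact (measure_mono (inter_subset_inter_right _ ball_subset_closedBall)).trans_lt
      (L.hausdorffMeasure_inter_lt_top (isCompact_closedBall x r))
  refine hF.not_ge ?_
  calc s * (μ (ball y s)).toReal = (2 * s - s) * μ.real (ball y s) := by
        rw [measureReal_def]; ring
    _ ≤ ∫ z, tent y (2 * s) z ∂μ := mul_measureReal_ball_le_integral_tent μ y (by linarith)
    _ = |(∫ z, tent y (2 * s) z ∂μ) - ∫ z, tent y (2 * s) z ∂ν| := by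
        rw [integral_tent_eq_zero hν_ball, sub_zero,
          abs_of_nonneg (integral_nonneg (tent_nonneg y (2 * s)))]
    _ ≤ FB (ball x r) μ ν := abs_integral_sub_le_FB hr.le measure_ball_lt_top.ne hν_fin
        (lipschitzWith_one_tent y (2 * s)) ((support_tent_subset y (2 * s)).trans hsub)

/-- If `F_{B(x,r)}(μ, c·H^d|_L) < s·μ(B(y,s))` where `y ∈ B(x,r/2)` and `B(y,2s) ⊆ B(x,r)`,
then `L` meets `B(y,2s)`. -/
theorem statement3 (n d : ℕ) (hd : 1 ≤ d) (hdn : d ≤ n)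
    (μ : Measure (EuclideanSpace ℝ (Fin n))) [IsLocallyFiniteMeasure μ]
    (x y : EuclideanSpace ℝ (Fin n)) (r s : ℝ) (hr : 0 < r) (hs : 0 < s)
    (hy : y ∈ ball x (r / 2)) (hsub : ball y (2 * s) ⊆ ball x r)
    (L : AffineSubspace ℝ (EuclideanSpace ℝ (Fin n))) (hL : IsAffineDPlane d L)
    (c : ℝ) (hc : 0 ≤ c)
    (hF : FB (ball x r) μ
        ((ENNReal.ofReal c) • (μH[(d:ℝ)]).restrict (L : Set (EuclideanSpace ℝ (Fin n))))
      < s * (μ (ball y s)).toReal) :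
    ((L : Set (EuclideanSpace ℝ (Fin n))) ∩ ball y (2 * s)).Nonempty :=
  statement3_general n d μ x y r s hr hs hsub L hL c hF

end
end

section
/- In ℝ², let L := ℝ×{0}, h > 0, L′ := ℝ×{h}, 0 < a < 1, and μ₁ := (1−a)·H¹|_L + a·H¹|_{L′}. Then for every x ∈ ℝ², every r > 0, and every 1-Lipschitz function φ : ℝ² → ℝ with supp φ ⊂ B(x,r), one has |∫ φ d(H¹|_L) − ∫ φ dμ₁| ≤ 4ahr. -/
open MeasureTheory Metric Set
open scoped ENNReal NNReal

noncomputable section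

/-!
Both measures live on horizontal lines, each of which is an isometric copy of `ℝ`, so every
integral is a one-dimensional integral of a section `t ↦ φ (t, c)` of `φ`. The difference of the
two integrals is `a (∫ φ(t,0) dt - ∫ φ(t,h) dt)`. Both sections vanish outside an interval of
length `2r` and, `φ` being `1`-Lipschitz, differ pointwise by at most `h`; hence the difference
is at most `2ahr`.
-/

theorem norm_integral_le_of_support_subset_Ioc {E : Type*} [NormedAddCommGroup E]
    [NormedSpace ℝ E] {g : ℝ → E} {a b C : ℝ} (hab : a ≤ b) (hg : Function.support g ⊆ Ioc a b)
    (hC : ∀ t, ‖g t‖ ≤ C) : ‖∫ t, g t‖ ≤ C * (b - a) := by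
  have hvanish : ∀ t ∉ Ioc a b, g t = 0 := fun t ht => by
    simpa using mt (@hg t) ht
  rw [← setIntegral_eq_integral_of_forall_compl_eq_zero hvanish,
    ← intervalIntegral.integral_of_le hab, ← abs_of_nonneg (sub_nonneg.2 hab)]
  exact intervalIntegral.norm_integral_le_of_norm_le_const fun t _ => hC t

def horizontalLine (c : ℝ) (t : ℝ) : EuclideanSpace ℝ (Fin 2) := !₂[t, c]

@[simp] lemma horizontalLine_apply_zero (c t : ℝ) : horizontalLine c t 0 = t := rfl

@[simp] lemma horizontalLine_apply_one (c t : ℝ) : horizontalLine c t 1 = c := rfl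

lemma dist_horizontalLine (c c' s t : ℝ) :
    dist (horizontalLine c s) (horizontalLine c' t) = √((s - t) ^ 2 + (c - c') ^ 2) := by
  simp [EuclideanSpace.dist_eq, Fin.sum_univ_two, Real.dist_eq, sq_abs]

lemma isometry_horizontalLine (c : ℝ) : Isometry (horizontalLine c) :=
  Isometry.of_dist_eq fun s t => by
    rw [dist_horizontalLine, sub_self, zero_pow two_ne_zero, add_zero, Real.sqrt_sq_eq_abs,
      Real.dist_eq]

lemma range_horizontalLine (c : ℝ) :
    range (horizontalLine c) = {p : EuclideanSpace ℝ (Fin 2) | p 1 = c} := by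
  ext p
  refine ⟨by rintro ⟨t, rfl⟩; rfl, fun hp => ⟨p 0, ?_⟩⟩
  ext i
  fin_cases i
  · rfl
  · exact hp.symm

lemma measurableEmbedding_horizontalLine (c : ℝ) : MeasurableEmbedding (horizontalLine c) :=
  (isometry_horizontalLine c).isClosedEmbedding.measurableEmbedding

lemma hausdorffMeasure_restrict_horizontal (c : ℝ) :
    (μH[1] : Measure (EuclideanSpace ℝ (Fin 2))).restrict {p | p 1 = c}
      = volume.map (horizontalLine c) := by
  rw [← hausdorffMeasure_real, (isometry_horizontalLine c).map_hausdorffMeasure (.inl zero_le_one),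
    range_horizontalLine]

lemma integral_hausdorffMeasure_restrict_horizontal (c : ℝ)
    (φ : EuclideanSpace ℝ (Fin 2) → ℝ) :
    ∫ y, φ y ∂(μH[1].restrict {p | p 1 = c}) = ∫ t, φ (horizontalLine c t) := by
  rw [hausdorffMeasure_restrict_horizontal, (measurableEmbedding_horizontalLine c).integral_map]

lemma integrable_hausdorffMeasure_restrict_horizontal_iff (c : ℝ)
    {φ : EuclideanSpace ℝ (Fin 2) → ℝ} :
    Integrable φ (μH[1].restrict {p | p 1 = c}) ↔ Integrable (φ ∘ horizontalLine c) := by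
  rw [hausdorffMeasure_restrict_horizontal,
    (measurableEmbedding_horizontalLine c).integrable_map_iff]

lemma mem_Ioc_of_horizontalLine_mem_ball {x : EuclideanSpace ℝ (Fin 2)} {r c t : ℝ}
    (hmem : horizontalLine c t ∈ ball x r) : t ∈ Ioc (x 0 - r) (x 0 + r) := by
  have hdist : |t - x 0| < r :=
    ((PiLp.dist_apply_le (horizontalLine c t) x 0).trans_lt hmem).trans_eq' (Real.dist_eq _ _).symm
  obtain ⟨hlow, hupp⟩ := abs_lt.1 hdist
  exact ⟨by linarith, by linarith⟩

section LipschitzSections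

variable {φ : EuclideanSpace ℝ (Fin 2) → ℝ} {x : EuclideanSpace ℝ (Fin 2)} {r : ℝ}

lemma support_comp_horizontalLine_subset (hsupp : Function.support φ ⊆ ball x r) (c : ℝ) :
    Function.support (φ ∘ horizontalLine c) ⊆ Ioc (x 0 - r) (x 0 + r) :=
  fun _ ht => mem_Ioc_of_horizontalLine_mem_ball (hsupp ht)

lemma integrable_comp_horizontalLine (hφ : Continuous φ)
    (hsupp : Function.support φ ⊆ ball x r) (c : ℝ) :
    Integrable fun t => φ (horizontalLine c t) :=
  (hφ.comp (isometry_horizontalLine c).continuous).integrable_of_hasCompactSupport <|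
    HasCompactSupport.intro' isCompact_Icc isClosed_Icc fun _ ht =>
      Function.notMem_support.1 fun hne =>
        ht (Ioc_subset_Icc_self (support_comp_horizontalLine_subset hsupp c hne))

lemma abs_integral_horizontal_sub_le {K : ℝ≥0} (hφ : LipschitzWith K φ)
    (hsupp : Function.support φ ⊆ ball x r) (hr : 0 ≤ r) (c c' : ℝ) :
    |(∫ t, φ (horizontalLine c t)) - ∫ t, φ (horizontalLine c' t)| ≤ K * |c - c'| * (2 * r) := by
  have hsection : ∀ t, ‖φ (horizontalLine c t) - φ (horizontalLine c' t)‖ ≤ K * |c - c'| :=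
    fun t => by
      simpa [← Real.dist_eq, dist_horizontalLine, Real.sqrt_sq_eq_abs] using
        hφ.dist_le_mul (horizontalLine c t) (horizontalLine c' t)
  have hsupp_diff : Function.support (fun t => φ (horizontalLine c t) - φ (horizontalLine c' t))
      ⊆ Ioc (x 0 - r) (x 0 + r) :=
    (Function.support_sub _ _).trans <| union_subset
      (support_comp_horizontalLine_subset hsupp c) (support_comp_horizontalLine_subset hsupp c')
  rw [← integral_sub (integrable_comp_horizontalLine hφ.continuous hsupp c)
    (integrable_comp_horizontalLine hφ.continuous hsupp c')]
  refine (norm_integral_le_of_support_subset_Ioc (by linarith) hsupp_diff hsection).trans_eq ?_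
  ring

end LipschitzSections

/-- For `μ₁ = (1−a)·H¹|_L + a·H¹|_{L(h)}`, the `F`-distance of `μ₁` to `H¹|_L` on any ball
`B(x,r)` is at most `4ahr`. -/
theorem statement14 (h : ℝ) (hh : 0 < h) (a : ℝ) (ha0 : 0 < a) (ha1 : a < 1)
    (L L' : Set (EuclideanSpace ℝ (Fin 2)))
    (hL : L = {p : EuclideanSpace ℝ (Fin 2) | p 1 = 0})
    (hL' : L' = {p : EuclideanSpace ℝ (Fin 2) | p 1 = h})
    (μ₁ : Measure (EuclideanSpace ℝ (Fin 2)))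
    (hμ₁ : μ₁ = ENNReal.ofReal (1 - a) • (μH[(1:ℝ)]).restrict L
        + ENNReal.ofReal a • (μH[(1:ℝ)]).restrict L') :
    ∀ (x : EuclideanSpace ℝ (Fin 2)) (r : ℝ), 0 < r →
      ∀ φ : EuclideanSpace ℝ (Fin 2) → ℝ, LipschitzWith 1 φ →
        Function.support φ ⊆ ball x r →
        |(∫ y, φ y ∂((μH[(1:ℝ)]).restrict L)) - ∫ y, φ y ∂μ₁| ≤ 4 * a * h * r := by
  intro x r hr φ hφ hsupp
  subst hL hL' hμ₁
  have hint : ∀ c : ℝ, Integrable φ (μH[1].restrict {p | p 1 = c}) := fun c =>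
    (integrable_hausdorffMeasure_restrict_horizontal_iff c).2
      (integrable_comp_horizontalLine hφ.continuous hsupp c)
  have hsections := abs_integral_horizontal_sub_le hφ hsupp hr.le 0 h
  rw [integral_add_measure ((hint 0).smul_measure ENNReal.ofReal_ne_top)
      ((hint h).smul_measure ENNReal.ofReal_ne_top), integral_smul_measure, integral_smul_measure,
    ENNReal.toReal_ofReal (by linarith), ENNReal.toReal_ofReal ha0.le,
    integral_hausdorffMeasure_restrict_horizontal, integral_hausdorffMeasure_restrict_horizontal]
  rw [NNReal.coe_one, one_mul, zero_sub, abs_neg, abs_of_pos hh] at hsections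
  set I₀ := ∫ t, φ (horizontalLine 0 t)
  set Iₕ := ∫ t, φ (horizontalLine h t)
  have hdiff : I₀ - ((1 - a) • I₀ + a • Iₕ) = a * (I₀ - Iₕ) := by
    simp only [smul_eq_mul]; ring
  calc |I₀ - ((1 - a) • I₀ + a • Iₕ)| = a * |I₀ - Iₕ| := by rw [hdiff, abs_mul, abs_of_pos ha0]
    _ ≤ a * (h * (2 * r)) := by gcongr
    _ ≤ 4 * a * h * r := by nlinarith [mul_pos (mul_pos ha0 hh) hr]

end
end

section
/- In ℝ², let L := ℝ×{0}, h > 0, L′ := ℝ×{h}, 0 < a ≤ 1/2, and μ₁ := (1−a)·H¹|_L + a·H¹|_{L′}. There is an absolute constant C > 0 such that for every x ∈ L ∪ L′, ∫₀^∞ α_{μ₁}¹(x,r)² dr/r ≤ C·a²·log(1/a). -/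
/-!
For `r ≤ h` the ball `B(x, r)` meets only the line through `x`, on which `μ₁` is a multiple of
`H¹`, so `α` vanishes. For `r > h`, comparing `μ₁` with `H¹` on the heavy line `L` costs `a·h·r`,
since a 1-Lipschitz `φ` changes by at most `h` between the two lines; as `μ₁(B(x, r)) ≳ r` for
`x ∈ L` and `≳ √(r² - h²)` for `x ∈ L'`, this gives `α ≲ a h / r`, resp. `α ≲ a h / √(r² - h²)`.
The second bound is not square integrable against `dr / r` at `r = h`: for `h < r ≤ (1 + a) h`
one compares instead with `a·H¹` on `L'`, which costs only `(r - h)·√(r² - h²)` because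
`|φ| ≤ r - h` on the short chord `L ∩ B(x, r)`. Integrating the squares, every range of scales
contributes `O(a²)` except `(1 + a) h < r ≤ 2 h`, where `∫ a² / (r - h) dr = a² log (1 / a)`.
-/

open MeasureTheory Metric Set
open scoped ENNReal NNReal

noncomputable section

open Function

abbrev E2 := EuclideanSpace ℝ (Fin 2)

def horizLine (c : ℝ) (t : ℝ) : E2 := !₂[t, c]

@[simp] lemma horizLine_zero (c t : ℝ) : horizLine c t 0 = t := rfl
@[simp] lemma horizLine_one (c t : ℝ) : horizLine c t 1 = c := rfl

lemma dist_horizLine (c t : ℝ) (x : E2) :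
    dist (horizLine c t) x = √((t - x 0) ^ 2 + (c - x 1) ^ 2) := by
  simp [EuclideanSpace.dist_eq, Fin.sum_univ_two, Real.dist_eq]

lemma isometry_horizLine (c : ℝ) : Isometry (horizLine c) :=
  Isometry.of_dist_eq fun s t => by
    rw [dist_horizLine, horizLine_zero, horizLine_one, sub_self, Real.dist_eq,
      ← Real.sqrt_sq_eq_abs]
    ring_nf

lemma range_horizLine (c : ℝ) : range (horizLine c) = {p : E2 | p 1 = c} := by
  refine Subset.antisymm (range_subset_iff.2 fun t => rfl) fun p hp => ⟨p 0, ?_⟩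
  ext i
  fin_cases i
  · rfl
  · exact hp.symm

lemma abs_sub_le_dist_horizLine (c t : ℝ) (x : E2) : |c - x 1| ≤ dist (horizLine c t) x := by
  rw [dist_horizLine, ← Real.sqrt_sq_eq_abs]
  exact Real.sqrt_le_sqrt (le_add_of_nonneg_left (sq_nonneg _))

lemma horizLine_preimage_ball (c : ℝ) (x : E2) {r : ℝ} (hr : 0 ≤ r) :
    horizLine c ⁻¹' ball x r =
      Ioo (x 0 - √(r ^ 2 - (c - x 1) ^ 2)) (x 0 + √(r ^ 2 - (c - x 1) ^ 2)) := by
  ext t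
  rw [mem_preimage, mem_ball, dist_horizLine, Real.sqrt_lt (by positivity) hr, mem_Ioo,
    ← sub_lt_iff_lt_add', sub_lt_comm, ← abs_sub_lt_iff, abs_sub_comm,
    Real.lt_sqrt (abs_nonneg _), sq_abs, lt_sub_iff_add_lt]

abbrev lineMeasure (c : ℝ) : Measure E2 := (μH[(1:ℝ)] : Measure E2).restrict {p : E2 | p 1 = c}

lemma lineMeasure_eq_map (c : ℝ) : lineMeasure c = volume.map (horizLine c) := by
  rw [← hausdorffMeasure_real, (isometry_horizLine c).map_hausdorffMeasure (Or.inl zero_le_one),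
    range_horizLine]

lemma measurableEmbedding_horizLine (c : ℝ) : MeasurableEmbedding (horizLine c) :=
  (isometry_horizLine c).isClosedEmbedding.measurableEmbedding

lemma lineMeasure_ball (c : ℝ) (x : E2) {r : ℝ} (hr : 0 ≤ r) :
    lineMeasure c (ball x r) = ENNReal.ofReal (2 * √(r ^ 2 - (c - x 1) ^ 2)) := by
  rw [lineMeasure_eq_map, (measurableEmbedding_horizLine c).map_apply,
    horizLine_preimage_ball c x hr, Real.volume_Ioo]
  ring_nf

lemma integral_lineMeasure (c : ℝ) (φ : E2 → ℝ) :
    ∫ y, φ y ∂lineMeasure c = ∫ t, φ (horizLine c t) := by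
  rw [lineMeasure_eq_map, (measurableEmbedding_horizLine c).integral_map]

lemma integrable_lineMeasure_iff (c : ℝ) {φ : E2 → ℝ} :
    Integrable φ (lineMeasure c) ↔ Integrable (fun t => φ (horizLine c t)) := by
  rw [lineMeasure_eq_map, (measurableEmbedding_horizLine c).integrable_map_iff]
  rfl

def horizLineSubspace (c : ℝ) : AffineSubspace ℝ E2 :=
  AffineSubspace.mk' (horizLine c 0) (ℝ ∙ horizLine 0 1)

lemma coe_horizLineSubspace (c : ℝ) : (horizLineSubspace c : Set E2) = {p : E2 | p 1 = c} := by
  ext p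
  simp only [horizLineSubspace, AffineSubspace.mem_coe, AffineSubspace.mem_mk',
    Submodule.mem_span_singleton, mem_ofPred_eq]
  constructor
  · rintro ⟨s, hs⟩
    have h1 := congr_arg (· 1) hs
    simp only [PiLp.smul_apply, vsub_eq_sub, PiLp.sub_apply, horizLine_one, smul_zero] at h1
    linarith
  · intro hp
    refine ⟨p 0, ?_⟩
    ext i
    fin_cases i <;> simp [hp]

lemma isAffineDPlane_horizLineSubspace (c : ℝ) : IsAffineDPlane 1 (horizLineSubspace c) := by
  refine ⟨⟨horizLine c 0, AffineSubspace.self_mem_mk' _ _⟩, ?_⟩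
  rw [horizLineSubspace, AffineSubspace.direction_mk']
  refine finrank_span_singleton fun h => ?_
  simpa using congr_arg (· 0) h

section FB

variable {n : ℕ}

lemma FB_nonneg (B : Set (EuclideanSpace ℝ (Fin n))) (σ ν : Measure (EuclideanSpace ℝ (Fin n))) :
    0 ≤ FB B σ ν := by
  by_cases hb : BddAbove {t : ℝ | ∃ φ : EuclideanSpace ℝ (Fin n) → ℝ,
      LipschitzWith 1 φ ∧ support φ ⊆ B ∧ t = |(∫ y, φ y ∂σ) - (∫ y, φ y ∂ν)|}
  · exact le_csSup hb ⟨fun _ => 0, LipschitzWith.const' 0, by simp, by simp⟩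
  · rw [FB, Real.sSup_of_not_bddAbove hb]

lemma FB_le {B : Set (EuclideanSpace ℝ (Fin n))} {σ ν : Measure (EuclideanSpace ℝ (Fin n))}
    {M : ℝ} (hM : 0 ≤ M)
    (H : ∀ φ : EuclideanSpace ℝ (Fin n) → ℝ, LipschitzWith 1 φ → support φ ⊆ B →
      |(∫ y, φ y ∂σ) - (∫ y, φ y ∂ν)| ≤ M) :
    FB B σ ν ≤ M :=
  Real.sSup_le (by rintro t ⟨φ, hφ, hsupp, rfl⟩; exact H φ hφ hsupp) hM

lemma alphaCoef_nonneg (d : ℕ) (μ : Measure (EuclideanSpace ℝ (Fin n)))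
    (x : EuclideanSpace ℝ (Fin n)) {r : ℝ} (hr : 0 ≤ r) : 0 ≤ alphaCoef d μ x r :=
  mul_nonneg (by positivity) <|
    Real.sInf_nonneg (by rintro t ⟨c, L, -, -, rfl⟩; exact FB_nonneg _ _ _)

variable {d : ℕ} {μ : Measure (EuclideanSpace ℝ (Fin n))} {x : EuclideanSpace ℝ (Fin n)}
  {r c M : ℝ} {L : AffineSubspace ℝ (EuclideanSpace ℝ (Fin n))}

lemma alphaCoef_le_div_of_FB_le (hc : 0 ≤ c) (hL : IsAffineDPlane d L) (hr : 0 ≤ r)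
    (hFB : FB (ball x r) μ (ENNReal.ofReal c • (μH[(d:ℝ)]).restrict (L : Set _)) ≤ M) :
    alphaCoef d μ x r ≤ M / (r * (μ (ball x r)).toReal) := by
  rw [alphaCoef, one_div_mul_eq_div]
  gcongr
  exact le_trans (csInf_le ⟨0, by rintro t ⟨c, L, -, -, rfl⟩; exact FB_nonneg _ _ _⟩
    ⟨c, L, hc, hL, rfl⟩) hFB

lemma alphaCoef_eq_zero_of_FB_le_zero (hc : 0 ≤ c) (hL : IsAffineDPlane d L) (hr : 0 ≤ r)
    (hFB : FB (ball x r) μ (ENNReal.ofReal c • (μH[(d:ℝ)]).restrict (L : Set _)) ≤ 0) :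
    alphaCoef d μ x r = 0 :=
  le_antisymm ((alphaCoef_le_div_of_FB_le hc hL hr hFB).trans_eq (zero_div _))
    (alphaCoef_nonneg d μ x hr)

end FB

lemma abs_le_sub_dist_of_support_subset_ball {E : Type*} [NormedAddCommGroup E]
    [NormedSpace ℝ E] [Nontrivial E] {φ : E → ℝ} {x p : E} {r : ℝ} (hφ : LipschitzWith 1 φ)
    (hsupp : support φ ⊆ ball x r) (hp : p ∈ ball x r) : |φ p| ≤ r - dist p x := by
  obtain ⟨u, hu, hpu⟩ : ∃ u : E, ‖u‖ = 1 ∧ p - x = dist p x • u := by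
    rcases eq_or_ne p x with rfl | hpx
    · obtain ⟨u, hu⟩ := exists_norm_eq E zero_le_one
      exact ⟨u, hu, by simp⟩
    · have hpx' : ‖p - x‖ ≠ 0 := norm_ne_zero_iff.2 (sub_ne_zero.2 hpx)
      exact ⟨‖p - x‖⁻¹ • (p - x), by rw [norm_smul, norm_inv, norm_norm, inv_mul_cancel₀ hpx'],
        by rw [dist_eq_norm, smul_inv_smul₀ hpx']⟩
  have hr : 0 ≤ r := dist_nonneg.trans (mem_ball.1 hp).le
  -- `x + r • u` is the point of the sphere nearest to `p`.
  have hq : φ (x + r • u) = 0 := notMem_support.1 fun h => by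
    simpa [dist_eq_norm, norm_smul, hu, abs_of_nonneg hr] using hsupp h
  have hpq : p - (x + r • u) = (dist p x - r) • u := by rw [sub_smul, ← hpu]; abel
  calc |φ p| = dist (φ p) (φ (x + r • u)) := by rw [hq, Real.dist_eq, sub_zero]
    _ ≤ dist p (x + r • u) := by simpa using hφ.dist_le_mul p (x + r • u)
    _ = r - dist p x := by
      rw [dist_eq_norm, hpq, norm_smul, hu, mul_one, Real.norm_eq_abs,
        abs_of_nonpos (by linarith [mem_ball.1 hp]), neg_sub]

lemma abs_integral_le_of_support_subset_Ioo {ψ : ℝ → ℝ} {A B M : ℝ} (hAB : A ≤ B)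
    (hsupp : support ψ ⊆ Ioo A B) (hM : ∀ t ∈ Ioo A B, |ψ t| ≤ M) :
    |∫ t, ψ t| ≤ M * (B - A) := by
  rw [← setIntegral_eq_integral_of_forall_compl_eq_zero fun t ht => notMem_support.1
    fun h => ht (hsupp h), ← Real.volume_real_Ioo_of_le hAB]
  exact norm_setIntegral_le_of_norm_le_const (f := ψ) measure_Ioo_lt_top hM

section LineIntegrals

variable {φ : E2 → ℝ} {x : E2} {r : ℝ}

lemma support_comp_horizLine_subset (hsupp : support φ ⊆ ball x r) (c : ℝ) :
    support (fun t => φ (horizLine c t)) ⊆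
      Ioo (x 0 - √(r ^ 2 - (c - x 1) ^ 2)) (x 0 + √(r ^ 2 - (c - x 1) ^ 2)) := fun t ht => by
  have hball : horizLine c t ∈ ball x r := hsupp ht
  rwa [← horizLine_preimage_ball c x (dist_nonneg.trans (mem_ball.1 hball).le)]

lemma integrable_comp_horizLine (hφ : Continuous φ) (hsupp : support φ ⊆ ball x r) (c : ℝ) :
    Integrable (fun t => φ (horizLine c t)) :=
  (hφ.comp (isometry_horizLine c).continuous).integrable_of_hasCompactSupport <|
    HasCompactSupport.intro isCompact_Icc fun _ ht => notMem_support.1 fun h =>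
      ht (Ioo_subset_Icc_self (support_comp_horizLine_subset hsupp c h))

lemma integral_comp_horizLine_eq_zero (hsupp : support φ ⊆ ball x r) {c : ℝ}
    (hc : r ≤ |c - x 1|) : ∫ t, φ (horizLine c t) = 0 := by
  have hzero (t : ℝ) : φ (horizLine c t) = 0 := notMem_support.1 fun h =>
    (hc.trans (abs_sub_le_dist_horizLine c t x)).not_gt (mem_ball.1 (hsupp h))
  simp [hzero]

lemma abs_integral_comp_horizLine_le (hφ : LipschitzWith 1 φ) (hsupp : support φ ⊆ ball x r)
    {c : ℝ} (hc : |c - x 1| ≤ r) :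
    |∫ t, φ (horizLine c t)| ≤ (r - |c - x 1|) * (2 * √(r ^ 2 - (c - x 1) ^ 2)) := by
  refine (abs_integral_le_of_support_subset_Ioo (M := r - |c - x 1|)
    (by linarith [Real.sqrt_nonneg (r ^ 2 - (c - x 1) ^ 2)])
    (support_comp_horizLine_subset hsupp c) fun t _ => ?_).trans_eq (by ring)
  by_cases hball : horizLine c t ∈ ball x r
  · exact (abs_le_sub_dist_of_support_subset_ball hφ hsupp hball).trans
      (by linarith [abs_sub_le_dist_horizLine c t x])
  · rw [notMem_support.1 fun h => hball (hsupp h), abs_zero]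
    linarith

lemma abs_integral_comp_horizLine_sub_le (hφ : LipschitzWith 1 φ)
    (hsupp : support φ ⊆ ball x r) (hr : 0 ≤ r) (c c' : ℝ) :
    |(∫ t, φ (horizLine c t)) - ∫ t, φ (horizLine c' t)| ≤ |c - c'| * (2 * r) := by
  have hIoo (b : ℝ) : Ioo (x 0 - √(r ^ 2 - (b - x 1) ^ 2)) (x 0 + √(r ^ 2 - (b - x 1) ^ 2)) ⊆
      Ioo (x 0 - r) (x 0 + r) := by
    have : √(r ^ 2 - (b - x 1) ^ 2) ≤ r := Real.sqrt_le_iff.2 ⟨hr, by nlinarith⟩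
    exact Ioo_subset_Ioo (by linarith) (by linarith)
  rw [← integral_sub (integrable_comp_horizLine hφ.continuous hsupp c)
    (integrable_comp_horizLine hφ.continuous hsupp c')]
  have hsupp' : support (fun t => φ (horizLine c t) - φ (horizLine c' t)) ⊆
      Ioo (x 0 - r) (x 0 + r) :=
    (support_sub _ _).trans (union_subset ((support_comp_horizLine_subset hsupp c).trans (hIoo c))
      ((support_comp_horizLine_subset hsupp c').trans (hIoo c')))
  refine (abs_integral_le_of_support_subset_Ioo (M := |c - c'|) (by linarith) hsupp'
    fun t _ => ?_).trans_eq (by ring)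
  calc |φ (horizLine c t) - φ (horizLine c' t)| = dist (φ (horizLine c t)) (φ (horizLine c' t)) :=
        (Real.dist_eq _ _).symm
    _ ≤ dist (horizLine c t) (horizLine c' t) := by simpa using hφ.dist_le_mul _ _
    _ = |c - c'| := by simp [dist_horizLine, Real.sqrt_sq_eq_abs]

end LineIntegrals

def twoLines (a h : ℝ) : Measure E2 :=
  ENNReal.ofReal (1 - a) • lineMeasure 0 + ENNReal.ofReal a • lineMeasure h

lemma hausdorffMeasure_restrict_horizLineSubspace (c : ℝ) :
    (μH[((1 : ℕ) : ℝ)] : Measure E2).restrict (horizLineSubspace c : Set E2) = lineMeasure c := by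
  rw [Nat.cast_one, coe_horizLineSubspace]

lemma integral_smul_lineMeasure {b : ℝ} (hb : 0 ≤ b) (c : ℝ) (φ : E2 → ℝ) :
    ∫ y, φ y ∂(ENNReal.ofReal b • lineMeasure c) = b * ∫ t, φ (horizLine c t) := by
  rw [integral_smul_measure, integral_lineMeasure, ENNReal.toReal_ofReal hb, smul_eq_mul]

section TwoLines

variable {a h : ℝ} {x : E2} {r : ℝ}

lemma integral_twoLines (ha0 : 0 ≤ a) (ha1 : a ≤ 1) {φ : E2 → ℝ} (hφ : Continuous φ)
    (hsupp : support φ ⊆ ball x r) :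
    ∫ y, φ y ∂twoLines a h =
      (1 - a) * (∫ t, φ (horizLine 0 t)) + a * ∫ t, φ (horizLine h t) := by
  have hint (c : ℝ) : Integrable φ (lineMeasure c) :=
    (integrable_lineMeasure_iff c).2 (integrable_comp_horizLine hφ hsupp c)
  rw [twoLines, integral_add_measure ((hint 0).smul_measure ENNReal.ofReal_ne_top)
    ((hint h).smul_measure ENNReal.ofReal_ne_top), integral_smul_lineMeasure (by linarith),
    integral_smul_lineMeasure ha0]

lemma twoLines_ball_toReal (ha0 : 0 ≤ a) (ha1 : a ≤ 1) (hr : 0 ≤ r) :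
    (twoLines a h (ball x r)).toReal =
      (1 - a) * (2 * √(r ^ 2 - (0 - x 1) ^ 2)) + a * (2 * √(r ^ 2 - (h - x 1) ^ 2)) := by
  simp only [twoLines, Measure.add_apply, Measure.smul_apply, smul_eq_mul,
    lineMeasure_ball _ x hr]
  rw [ENNReal.toReal_add (by finiteness) (by finiteness), ENNReal.toReal_mul, ENNReal.toReal_mul,
    ENNReal.toReal_ofReal (by linarith), ENNReal.toReal_ofReal ha0,
    ENNReal.toReal_ofReal (by positivity), ENNReal.toReal_ofReal (by positivity)]

lemma FB_twoLines_lineMeasure_zero_le (ha0 : 0 ≤ a) (ha1 : a ≤ 1) (hh : 0 ≤ h) (hr : 0 ≤ r) :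
    FB (ball x r) (twoLines a h) (ENNReal.ofReal 1 • lineMeasure 0) ≤ a * (h * (2 * r)) :=
  FB_le (by positivity) fun φ hφ hsupp => by
    rw [integral_twoLines ha0 ha1 hφ.continuous hsupp, integral_smul_lineMeasure zero_le_one,
      show ∀ I₀ Iₕ : ℝ, (1 - a) * I₀ + a * Iₕ - 1 * I₀ = a * (Iₕ - I₀) by intros; ring, abs_mul,
      abs_of_nonneg ha0]
    have := abs_integral_comp_horizLine_sub_le hφ hsupp hr h 0
    rw [sub_zero, abs_of_nonneg hh] at this
    gcongr

lemma FB_twoLines_lineMeasure_self_le (ha0 : 0 ≤ a) (ha1 : a ≤ 1) (hh : 0 ≤ h) (hx : x 1 = h)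
    (hhr : h ≤ r) :
    FB (ball x r) (twoLines a h) (ENNReal.ofReal a • lineMeasure h) ≤
      (r - h) * (2 * √(r ^ 2 - h ^ 2)) :=
  FB_le (mul_nonneg (by linarith) (by positivity)) fun φ hφ hsupp => by
    have hdist : |0 - x 1| = h := by rw [hx, zero_sub, abs_neg, abs_of_nonneg hh]
    have := abs_integral_comp_horizLine_le hφ hsupp (hdist.trans_le hhr)
    rw [hdist, hx, zero_sub, neg_sq] at this
    rw [integral_twoLines ha0 ha1 hφ.continuous hsupp, integral_smul_lineMeasure ha0,
      add_sub_cancel_right, abs_mul, abs_of_nonneg (by linarith)]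
    exact (mul_le_of_le_one_left (abs_nonneg _) (by linarith)).trans this

lemma alphaCoef_twoLines_lower_eq_zero (ha0 : 0 ≤ a) (ha1 : a ≤ 1) (hx : x 1 = 0)
    (hr : 0 ≤ r) (hrh : r ≤ h) : alphaCoef 1 (twoLines a h) x r = 0 := by
  refine alphaCoef_eq_zero_of_FB_le_zero (sub_nonneg.2 ha1) (isAffineDPlane_horizLineSubspace 0)
    hr ?_
  rw [hausdorffMeasure_restrict_horizLineSubspace]
  refine FB_le le_rfl fun φ hφ hsupp => ?_
  rw [integral_twoLines ha0 ha1 hφ.continuous hsupp, integral_smul_lineMeasure (by linarith),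
    integral_comp_horizLine_eq_zero hsupp (c := h)
      (by rwa [hx, sub_zero, abs_of_nonneg (hr.trans hrh)])]
  simp

lemma alphaCoef_twoLines_upper_eq_zero (ha0 : 0 ≤ a) (ha1 : a ≤ 1) (hx : x 1 = h)
    (hr : 0 ≤ r) (hrh : r ≤ h) : alphaCoef 1 (twoLines a h) x r = 0 := by
  refine alphaCoef_eq_zero_of_FB_le_zero ha0 (isAffineDPlane_horizLineSubspace h) hr ?_
  rw [hausdorffMeasure_restrict_horizLineSubspace]
  refine FB_le le_rfl fun φ hφ hsupp => ?_
  rw [integral_twoLines ha0 ha1 hφ.continuous hsupp, integral_smul_lineMeasure ha0,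
    integral_comp_horizLine_eq_zero hsupp (c := 0)
      (by rwa [hx, zero_sub, abs_neg, abs_of_nonneg (hr.trans hrh)])]
  simp

lemma alphaCoef_twoLines_lower_le (ha0 : 0 ≤ a) (ha2 : a ≤ 1 / 2) (hh : 0 ≤ h)
    (hx : x 1 = 0) (hr : 0 < r) : alphaCoef 1 (twoLines a h) x r ≤ 2 * a * h / r := by
  have hmass : r ≤ (twoLines a h (ball x r)).toReal := by
    rw [twoLines_ball_toReal ha0 (by linarith) hr.le, hx, sub_zero, zero_pow two_ne_zero, sub_zero,
      Real.sqrt_sq hr.le]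
    nlinarith [Real.sqrt_nonneg (r ^ 2 - (h - 0) ^ 2)]
  calc alphaCoef 1 (twoLines a h) x r
      ≤ a * (h * (2 * r)) / (r * (twoLines a h (ball x r)).toReal) :=
        alphaCoef_le_div_of_FB_le zero_le_one (isAffineDPlane_horizLineSubspace 0) hr.le
          (by rw [hausdorffMeasure_restrict_horizLineSubspace]
              exact FB_twoLines_lineMeasure_zero_le ha0 (by linarith) hh hr.le)
    _ ≤ a * (h * (2 * r)) / (r * r) := by gcongr
    _ = 2 * a * h / r := by field_simp

lemma alphaCoef_twoLines_upper_le (ha0 : 0 ≤ a) (ha2 : a ≤ 1 / 2) (hh : 0 ≤ h)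
    (hx : x 1 = h) (hhr : h < r) :
    alphaCoef 1 (twoLines a h) x r ≤ 2 * a * h / √(r ^ 2 - h ^ 2) := by
  have hr : 0 < r := hh.trans_lt hhr
  have hs : 0 < √(r ^ 2 - h ^ 2) := Real.sqrt_pos.2 (by nlinarith)
  have hmass : √(r ^ 2 - h ^ 2) ≤ (twoLines a h (ball x r)).toReal := by
    rw [twoLines_ball_toReal ha0 (by linarith) hr.le, hx, zero_sub, neg_sq]
    nlinarith [Real.sqrt_nonneg (r ^ 2 - (h - h) ^ 2)]
  calc alphaCoef 1 (twoLines a h) x r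
      ≤ a * (h * (2 * r)) / (r * (twoLines a h (ball x r)).toReal) :=
        alphaCoef_le_div_of_FB_le zero_le_one (isAffineDPlane_horizLineSubspace 0) hr.le
          (by rw [hausdorffMeasure_restrict_horizLineSubspace]
              exact FB_twoLines_lineMeasure_zero_le ha0 (by linarith) hh hr.le)
    _ ≤ a * (h * (2 * r)) / (r * √(r ^ 2 - h ^ 2)) := by gcongr
    _ = 2 * a * h / √(r ^ 2 - h ^ 2) := by field_simp

lemma alphaCoef_twoLines_upper_le' (ha0 : 0 < a) (ha1 : a ≤ 1) (hh : 0 ≤ h)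
    (hx : x 1 = h) (hhr : h < r) :
    alphaCoef 1 (twoLines a h) x r ≤ (r - h) * √(r ^ 2 - h ^ 2) / (a * r ^ 2) := by
  have hr : 0 < r := hh.trans_lt hhr
  have hmass : a * (2 * r) ≤ (twoLines a h (ball x r)).toReal := by
    rw [twoLines_ball_toReal ha0.le ha1 hr.le, hx, sub_self, zero_pow two_ne_zero, sub_zero,
      Real.sqrt_sq hr.le]
    nlinarith [Real.sqrt_nonneg (r ^ 2 - (0 - h) ^ 2)]
  calc alphaCoef 1 (twoLines a h) x r
      ≤ (r - h) * (2 * √(r ^ 2 - h ^ 2)) / (r * (twoLines a h (ball x r)).toReal) :=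
        alphaCoef_le_div_of_FB_le ha0.le (isAffineDPlane_horizLineSubspace h) hr.le
          (by rw [hausdorffMeasure_restrict_horizLineSubspace]
              exact FB_twoLines_lineMeasure_self_le ha0.le ha1 hh hx hhr.le)
    _ ≤ (r - h) * (2 * √(r ^ 2 - h ^ 2)) / (r * (a * (2 * r))) := by
        gcongr
    _ = (r - h) * √(r ^ 2 - h ^ 2) / (a * r ^ 2) := by field_simp

lemma alphaCoef_twoLines_upper_sq_div_le (ha0 : 0 ≤ a) (ha2 : a ≤ 1 / 2) (hh : 0 ≤ h)
    (hx : x 1 = h) (hhr : h < r) :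
    alphaCoef 1 (twoLines a h) x r ^ 2 / r ≤ 4 * a ^ 2 * h ^ 2 / ((r ^ 2 - h ^ 2) * r) := by
  have hr : 0 < r := hh.trans_lt hhr
  have hs : 0 < r ^ 2 - h ^ 2 := by nlinarith
  calc alphaCoef 1 (twoLines a h) x r ^ 2 / r ≤ (2 * a * h / √(r ^ 2 - h ^ 2)) ^ 2 / r := by
        gcongr
        exacts [alphaCoef_nonneg 1 _ x hr.le, alphaCoef_twoLines_upper_le ha0 ha2 hh hx hhr]
    _ = 4 * a ^ 2 * h ^ 2 / ((r ^ 2 - h ^ 2) * r) := by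
        rw [div_pow, Real.sq_sqrt hs.le, div_div]
        ring

lemma alphaCoef_twoLines_upper_sq_div_le_sub_pow_three (ha0 : 0 < a) (ha1 : a ≤ 1) (hh : 0 < h)
    (hx : x 1 = h) (hhr : h < r) :
    alphaCoef 1 (twoLines a h) x r ^ 2 / r ≤ 2 / (a ^ 2 * h ^ 4) * (r - h) ^ 3 := by
  have hr : 0 < r := hh.trans hhr
  calc alphaCoef 1 (twoLines a h) x r ^ 2 / r
      ≤ ((r - h) * √(r ^ 2 - h ^ 2) / (a * r ^ 2)) ^ 2 / r := by
        gcongr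
        exacts [alphaCoef_nonneg 1 _ x hr.le, alphaCoef_twoLines_upper_le' ha0 ha1 hh.le hx hhr]
    _ = (r - h) ^ 3 * (r + h) / (a ^ 2 * r ^ 5) := by
        rw [div_pow, mul_pow, Real.sq_sqrt (by nlinarith)]
        field_simp
        ring
    _ ≤ (r - h) ^ 3 * (2 * r) / (a ^ 2 * r ^ 5) := by
        gcongr
        linarith
    _ = 2 / (a ^ 2 * r ^ 4) * (r - h) ^ 3 := by
        field_simp
    _ ≤ 2 / (a ^ 2 * h ^ 4) * (r - h) ^ 3 := by
        gcongr

lemma alphaCoef_twoLines_upper_sq_div_le_inv_sub (ha0 : 0 ≤ a) (ha2 : a ≤ 1 / 2) (hh : 0 < h)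
    (hx : x 1 = h) (hhr : h < r) :
    alphaCoef 1 (twoLines a h) x r ^ 2 / r ≤ 2 * a ^ 2 * (r - h)⁻¹ :=
  calc alphaCoef 1 (twoLines a h) x r ^ 2 / r
      ≤ 4 * a ^ 2 * h ^ 2 / ((r - h) * ((r + h) * r)) :=
        (alphaCoef_twoLines_upper_sq_div_le ha0 ha2 hh.le hx hhr).trans_eq (by ring_nf)
    _ ≤ 4 * a ^ 2 * h ^ 2 / ((r - h) * (2 * h * h)) := by
        gcongr
        · linarith
        · nlinarith
    _ = 2 * a ^ 2 * (r - h)⁻¹ := by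
        field_simp
        ring

lemma alphaCoef_twoLines_upper_sq_div_le_inv_pow_three (ha0 : 0 ≤ a) (ha2 : a ≤ 1 / 2)
    (hh : 0 < h) (hx : x 1 = h) (hhr : h + h ≤ r) :
    alphaCoef 1 (twoLines a h) x r ^ 2 / r ≤ 16 / 3 * a ^ 2 * h ^ 2 * (r ^ 3)⁻¹ := by
  have hr : 0 < r := by linarith
  calc alphaCoef 1 (twoLines a h) x r ^ 2 / r ≤ 4 * a ^ 2 * h ^ 2 / ((r ^ 2 - h ^ 2) * r) :=
        alphaCoef_twoLines_upper_sq_div_le ha0 ha2 hh.le hx (by linarith)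
    _ ≤ 4 * a ^ 2 * h ^ 2 / (3 / 4 * r ^ 2 * r) := by
        gcongr
        nlinarith
    _ = 16 / 3 * a ^ 2 * h ^ 2 * (r ^ 3)⁻¹ := by
        field_simp
        ring

end TwoLines

lemma setLIntegral_ofReal_le_of_le {α : Type*} [MeasurableSpace α] {μ : Measure α} {s : Set α}
    {f g : α → ℝ} (hs : MeasurableSet s) (hg : IntegrableOn g s μ) (hg0 : ∀ x ∈ s, 0 ≤ g x)
    (hfg : ∀ x ∈ s, f x ≤ g x) :
    ∫⁻ x in s, ENNReal.ofReal (f x) ∂μ ≤ ENNReal.ofReal (∫ x in s, g x ∂μ) := by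
  rw [ofReal_integral_eq_lintegral_ofReal hg ((ae_restrict_iff' hs).2 (ae_of_all _ hg0))]
  exact setLIntegral_mono' hs fun x hx => ENNReal.ofReal_le_ofReal (hfg x hx)

lemma setLIntegral_Ioi_le_add {μ : Measure ℝ} {f : ℝ → ℝ≥0∞} {a b : ℝ} (hab : a ≤ b) :
    ∫⁻ x in Ioi a, f x ∂μ ≤ (∫⁻ x in Ioc a b, f x ∂μ) + ∫⁻ x in Ioi b, f x ∂μ := by
  rw [← Ioc_union_Ioi_eq_Ioi hab]
  exact lintegral_union_le _ _ _

lemma eqOn_inv_pow_three_rpow {c : ℝ} (hc : 0 ≤ c) :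
    EqOn (fun r : ℝ => (r ^ 3)⁻¹) (fun r => r ^ (-3 : ℝ)) (Ioi c) := fun r hr => by
  dsimp only
  rw [Real.rpow_neg (hc.trans (le_of_lt hr)), show (3 : ℝ) = (3 : ℕ) by norm_num, Real.rpow_natCast]

lemma integrableOn_Ioi_inv_pow_three {c : ℝ} (hc : 0 < c) :
    IntegrableOn (fun r : ℝ => (r ^ 3)⁻¹) (Ioi c) :=
  (integrableOn_Ioi_rpow_of_lt (by norm_num) hc).congr_fun (eqOn_inv_pow_three_rpow hc.le).symm
    measurableSet_Ioi

lemma integral_Ioi_inv_pow_three {c : ℝ} (hc : 0 < c) :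
    ∫ r in Ioi c, (r ^ 3)⁻¹ = (2 * c ^ 2)⁻¹ := by
  rw [setIntegral_congr_fun measurableSet_Ioi (eqOn_inv_pow_three_rpow hc.le),
    integral_Ioi_rpow_of_lt (by norm_num) hc, show (-3 : ℝ) + 1 = -((2 : ℕ) : ℝ) by norm_num,
    Real.rpow_neg hc.le, Real.rpow_natCast]
  push_cast
  field_simp

lemma integral_Ioc_sub_pow_three (h δ : ℝ) (hδ : 0 ≤ δ) :
    ∫ r in Ioc h (h + δ), (r - h) ^ 3 = δ ^ 4 / 4 := by
  rw [← intervalIntegral.integral_of_le (by linarith),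
    intervalIntegral.integral_comp_sub_right (fun u => u ^ 3), sub_self, add_sub_cancel_left,
    integral_pow]
  norm_num

lemma integrableOn_Ioc_inv_sub {h u v : ℝ} (hu : 0 < u) :
    IntegrableOn (fun r => (r - h)⁻¹) (Ioc (h + u) (h + v)) := by
  have hcont : ContinuousOn (fun r => (r - h)⁻¹) (Icc (h + u) (h + v)) :=
    (continuous_sub_right h).continuousOn.inv₀ fun r hr =>
      sub_ne_zero.2 (ne_of_gt (by linarith [hr.1]))
  exact (hcont.integrableOn_compact isCompact_Icc).mono_set Ioc_subset_Icc_self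

lemma integral_Ioc_inv_sub {h u v : ℝ} (hu : 0 < u) (huv : u ≤ v) :
    ∫ r in Ioc (h + u) (h + v), (r - h)⁻¹ = Real.log (v / u) := by
  rw [← intervalIntegral.integral_of_le (by linarith),
    intervalIntegral.integral_comp_sub_right (fun u => u⁻¹), add_sub_cancel_left,
    add_sub_cancel_left, integral_inv]
  rw [uIcc_of_le huv]
  exact fun h0 => hu.not_ge h0.1

section JonesIntegral

variable {a h : ℝ} {x : E2}

lemma lintegral_alphaCoef_twoLines_lower_le (ha0 : 0 ≤ a) (ha2 : a ≤ 1 / 2) (hh : 0 < h)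
    (hx : x 1 = 0) :
    ∫⁻ r in Ioi (0 : ℝ), ENNReal.ofReal (alphaCoef 1 (twoLines a h) x r ^ 2 / r) ≤
      ENNReal.ofReal (2 * a ^ 2) := by
  have hsmall (r : ℝ) (hr : r ∈ Ioc 0 h) : alphaCoef 1 (twoLines a h) x r ^ 2 / r ≤ 0 := by
    rw [alphaCoef_twoLines_lower_eq_zero ha0 (by linarith) hx hr.1.le hr.2]
    simp
  have hlarge (r : ℝ) (hr : r ∈ Ioi h) :
      alphaCoef 1 (twoLines a h) x r ^ 2 / r ≤ 4 * a ^ 2 * h ^ 2 * (r ^ 3)⁻¹ := by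
    have hr0 : 0 < r := hh.trans hr
    calc alphaCoef 1 (twoLines a h) x r ^ 2 / r ≤ (2 * a * h / r) ^ 2 / r := by
          gcongr
          exacts [alphaCoef_nonneg 1 _ x hr0.le, alphaCoef_twoLines_lower_le ha0 ha2 hh.le hx hr0]
      _ = 4 * a ^ 2 * h ^ 2 * (r ^ 3)⁻¹ := by field_simp; ring
  calc _ ≤ _ := setLIntegral_Ioi_le_add hh.le
    _ ≤ ENNReal.ofReal (∫ r in Ioc 0 h, 0) +
          ENNReal.ofReal (∫ r in Ioi h, 4 * a ^ 2 * h ^ 2 * (r ^ 3)⁻¹) :=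
      add_le_add
        (setLIntegral_ofReal_le_of_le measurableSet_Ioc integrableOn_zero (fun _ _ => le_rfl)
          hsmall)
        (setLIntegral_ofReal_le_of_le measurableSet_Ioi
          ((integrableOn_Ioi_inv_pow_three hh).const_mul _)
          (fun r hr => by have := hh.trans hr; positivity) hlarge)
    _ = ENNReal.ofReal (2 * a ^ 2) := by
      rw [integral_zero, ENNReal.ofReal_zero, zero_add, integral_const_mul,
        integral_Ioi_inv_pow_three hh]
      congr 1
      field_simp
      ring

lemma setLIntegral_Ioi_alphaCoef_twoLines_upper_le (ha0 : 0 < a) (ha2 : a ≤ 1 / 2) (hh : 0 < h)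
    (hx : x 1 = h) :
    ∫⁻ r in Ioi (h + a * h), ENNReal.ofReal (alphaCoef 1 (twoLines a h) x r ^ 2 / r) ≤
      ENNReal.ofReal (2 * a ^ 2 * Real.log (1 / a) + 2 * a ^ 2 / 3) := by
  set F : ℝ → ℝ := fun r => alphaCoef 1 (twoLines a h) x r ^ 2 / r
  have hah : 0 < a * h := mul_pos ha0 hh
  have hmid : ∫⁻ r in Ioc (h + a * h) (h + h), ENNReal.ofReal (F r) ≤
      ENNReal.ofReal (∫ r in Ioc (h + a * h) (h + h), 2 * a ^ 2 * (r - h)⁻¹) :=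
    setLIntegral_ofReal_le_of_le measurableSet_Ioc ((integrableOn_Ioc_inv_sub hah).const_mul _)
      (fun r hr => mul_nonneg (by positivity) (inv_nonneg.2 (by linarith [hr.1])))
      fun r hr => alphaCoef_twoLines_upper_sq_div_le_inv_sub ha0.le ha2 hh hx (by linarith [hr.1])
  have hfar : ∫⁻ r in Ioi (h + h), ENNReal.ofReal (F r) ≤
      ENNReal.ofReal (∫ r in Ioi (h + h), 16 / 3 * a ^ 2 * h ^ 2 * (r ^ 3)⁻¹) :=
    setLIntegral_ofReal_le_of_le measurableSet_Ioi
      ((integrableOn_Ioi_inv_pow_three (by linarith)).const_mul _)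
      (fun r hr => by
        have : 0 < r := by linarith [mem_Ioi.1 hr]
        positivity)
      fun r hr => alphaCoef_twoLines_upper_sq_div_le_inv_pow_three ha0.le ha2 hh hx (le_of_lt hr)
  have hlog : 0 ≤ Real.log (1 / a) := Real.log_nonneg (by rw [le_div_iff₀ ha0]; linarith)
  calc _ ≤ _ := setLIntegral_Ioi_le_add (by nlinarith)
    _ ≤ _ := add_le_add hmid hfar
    _ = _ := by
      rw [integral_const_mul, integral_Ioc_inv_sub hah (by nlinarith),
        show h / (a * h) = 1 / a by field_simp, integral_const_mul,
        integral_Ioi_inv_pow_three (by linarith),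
        ← ENNReal.ofReal_add (by positivity) (by positivity)]
      congr 1
      field_simp
      ring

lemma lintegral_alphaCoef_twoLines_upper_le (ha0 : 0 < a) (ha2 : a ≤ 1 / 2) (hh : 0 < h)
    (hx : x 1 = h) :
    ∫⁻ r in Ioi (0 : ℝ), ENNReal.ofReal (alphaCoef 1 (twoLines a h) x r ^ 2 / r) ≤
      ENNReal.ofReal (a ^ 2 / 2 + (2 * a ^ 2 * Real.log (1 / a) + 2 * a ^ 2 / 3)) := by
  set F : ℝ → ℝ := fun r => alphaCoef 1 (twoLines a h) x r ^ 2 / r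
  have hah : 0 < a * h := mul_pos ha0 hh
  have hsmall : ∫⁻ r in Ioc 0 h, ENNReal.ofReal (F r) ≤ ENNReal.ofReal (∫ r in Ioc 0 h, 0) :=
    setLIntegral_ofReal_le_of_le measurableSet_Ioc integrableOn_zero (fun _ _ => le_rfl)
      fun r hr => by
        simp [F, alphaCoef_twoLines_upper_eq_zero ha0.le (by linarith) hx hr.1.le hr.2]
  have hnear : ∫⁻ r in Ioc h (h + a * h), ENNReal.ofReal (F r) ≤
      ENNReal.ofReal (∫ r in Ioc h (h + a * h), 2 / (a ^ 2 * h ^ 4) * (r - h) ^ 3) :=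
    setLIntegral_ofReal_le_of_le measurableSet_Ioc (by fun_prop : Continuous _).integrableOn_Ioc
      (fun r hr => mul_nonneg (by positivity) (pow_nonneg (by linarith [hr.1]) 3))
      fun r hr => alphaCoef_twoLines_upper_sq_div_le_sub_pow_three ha0 (by linarith) hh hx hr.1
  have hfar := setLIntegral_Ioi_alphaCoef_twoLines_upper_le ha0 ha2 hh hx
  have hlog : 0 ≤ Real.log (1 / a) := Real.log_nonneg (by rw [le_div_iff₀ ha0]; linarith)
  calc _ ≤ _ := setLIntegral_Ioi_le_add hh.le
    _ ≤ _ := add_le_add hsmall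
          ((setLIntegral_Ioi_le_add (by nlinarith)).trans (add_le_add hnear hfar))
    _ = _ := by
      rw [integral_zero, ENNReal.ofReal_zero, zero_add, integral_const_mul,
        integral_Ioc_sub_pow_three h _ hah.le, ← ENNReal.ofReal_add (by positivity) (by positivity)]
      congr 1
      field_simp
      ring

end JonesIntegral

lemma one_le_two_mul_log_one_div {a : ℝ} (ha0 : 0 < a) (ha2 : a ≤ 1 / 2) :
    1 ≤ 2 * Real.log (1 / a) := by
  have : Real.log 2 ≤ Real.log (1 / a) :=
    Real.log_le_log two_pos (by rw [le_div_iff₀ ha0]; linarith)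
  linarith [Real.log_two_gt_d9]

/-- For `μ₁ = (1−a)·H¹|_L + a·H¹|_{L(h)}` with `0 < a ≤ 1/2`, the `α`-Jones function of
`μ₁` at any point of `L ∪ L(h)` is at most `C·a²·log(1/a)`. -/
theorem statement15 :
    ∃ C : ℝ, 0 < C ∧
      ∀ (h : ℝ), 0 < h → ∀ (a : ℝ), 0 < a → a ≤ 1/2 →
      ∀ (L L' : Set (EuclideanSpace ℝ (Fin 2))),
        L = {p : EuclideanSpace ℝ (Fin 2) | p 1 = 0} →
        L' = {p : EuclideanSpace ℝ (Fin 2) | p 1 = h} →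
      ∀ μ₁ : Measure (EuclideanSpace ℝ (Fin 2)),
        μ₁ = ENNReal.ofReal (1 - a) • (μH[(1:ℝ)]).restrict L
            + ENNReal.ofReal a • (μH[(1:ℝ)]).restrict L' →
      ∀ x ∈ L ∪ L',
        (∫⁻ r in Ioi (0:ℝ), ENNReal.ofReal (alphaCoef 1 μ₁ x r ^ 2 / r)) ≤
          ENNReal.ofReal (C * a ^ 2 * Real.log (1 / a)) := by
  refine ⟨5, by norm_num, ?_⟩
  rintro h hh a ha0 ha2 L L' rfl rfl μ₁ rfl x hx
  have hlog := mul_le_mul_of_nonneg_left (one_le_two_mul_log_one_div ha0 ha2) (sq_nonneg a)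
  rcases hx with hx | hx
  · refine (lintegral_alphaCoef_twoLines_lower_le ha0.le ha2 hh hx).trans
      (ENNReal.ofReal_le_ofReal ?_)
    nlinarith
  · refine (lintegral_alphaCoef_twoLines_upper_le ha0 ha2 hh hx).trans
      (ENNReal.ofReal_le_ofReal ?_)
    nlinarith

end
end

section
/- Let μ be a Radon measure on ℝⁿ, v ∈ ℝⁿ, and 0 ≤ a ≤ 1. Let τ_v[μ] denote the pushforward of μ under the translation y ↦ y + v, and set ν := (1−a)·μ + a·τ_v[μ]. Then for every x ∈ ℝⁿ and r > 0, F_{B(x,r)}(μ, ν) ≤ a·|v|·μ(B(x, r + |v|)). -/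
open MeasureTheory Metric Set
open scoped ENNReal NNReal

noncomputable section

/-! For a test function `φ`, the difference of its integrals against `μ` and `ν` is
`a ∫ (φ(y) - φ(y + v)) dμ(y)`. The integrand is bounded by `|v|` because `φ` is 1-Lipschitz,
and it vanishes outside `B(x, r + |v|)` because `φ` vanishes outside `B(x, r)`. -/

theorem integral_sub_integral_convexCombination_map {α : Type*} [MeasurableSpace α]
    {μ : Measure α} {T : α → α} (hT : MeasurableEmbedding T) {φ : α → ℝ}
    (hφ : Integrable φ μ) (hφT : Integrable (fun y => φ (T y)) μ) {a : ℝ} (ha0 : 0 ≤ a)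
    (ha1 : a ≤ 1) :
    ∫ y, φ y ∂μ - ∫ y, φ y ∂(ENNReal.ofReal (1 - a) • μ + ENNReal.ofReal a • μ.map T)
      = a * ∫ y, φ y - φ (T y) ∂μ := by
  have hφmap : Integrable φ (μ.map T) := hT.integrable_map_iff.2 hφT
  rw [integral_add_measure (hφ.smul_measure ENNReal.ofReal_ne_top)
    (hφmap.smul_measure ENNReal.ofReal_ne_top), integral_smul_measure, integral_smul_measure,
    hT.integral_map, ENNReal.toReal_ofReal (by linarith), ENNReal.toReal_ofReal ha0,
    integral_sub hφ hφT]
  simp only [smul_eq_mul]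
  ring

section Translation

variable {E : Type*} [NormedAddCommGroup E]

theorem support_sub_comp_add_subset_ball {φ : E → ℝ} {x : E} {r : ℝ}
    (hφ : Function.support φ ⊆ ball x r) (v : E) :
    Function.support (fun y => φ y - φ (y + v)) ⊆ ball x (r + ‖v‖) := by
  intro y hy
  by_contra hyS
  have hyr : y ∉ ball x r := fun h => hyS (ball_subset_ball (by simp) h)
  have hyvr : y + v ∉ ball x r := by
    intro h
    refine hyS (mem_ball.2 ?_)
    calc dist y x ≤ dist y (y + v) + dist (y + v) x := dist_triangle _ _ _
      _ < ‖v‖ + r := by rw [dist_self_add_right]; linarith [mem_ball.1 h]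
      _ = r + ‖v‖ := add_comm _ _
  simp [Function.notMem_support.1 fun h => hyr (hφ h),
    Function.notMem_support.1 fun h => hyvr (hφ h)] at hy

variable [MeasurableSpace E] [BorelSpace E] [ProperSpace E]

theorem LipschitzWith.abs_integral_sub_comp_add_le {K : ℝ≥0} {φ : E → ℝ}
    (hφ : LipschitzWith K φ) {x : E} {r : ℝ} (hsupp : Function.support φ ⊆ ball x r)
    (μ : Measure E) [IsLocallyFiniteMeasure μ] (v : E) :
    |∫ y, φ y - φ (y + v) ∂μ| ≤ K * ‖v‖ * (μ (ball x (r + ‖v‖))).toReal := by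
  have hzero : ∀ y ∉ ball x (r + ‖v‖), φ y - φ (y + v) = 0 := fun y hy =>
    Function.notMem_support.1 fun h => hy (support_sub_comp_add_subset_ball hsupp v h)
  have hbound : ∀ y ∈ ball x (r + ‖v‖), ‖φ y - φ (y + v)‖ ≤ K * ‖v‖ := fun y _ => by
    simpa [← Real.dist_eq, dist_self_add_right] using hφ.dist_le_mul y (y + v)
  rw [← setIntegral_eq_integral_of_forall_compl_eq_zero hzero]
  exact norm_setIntegral_le_of_norm_le_const (measure_ball_lt_top (μ := μ)) hbound

end Translation

theorem statement17_general (n : ℕ) (μ : Measure (EuclideanSpace ℝ (Fin n)))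
    [IsLocallyFiniteMeasure μ]
    (v : EuclideanSpace ℝ (Fin n)) (a : ℝ) (ha0 : 0 ≤ a) (ha1 : a ≤ 1)
    (ν : Measure (EuclideanSpace ℝ (Fin n)))
    (hν : ν = ENNReal.ofReal (1 - a) • μ
        + ENNReal.ofReal a • Measure.map (fun y => y + v) μ)
    (x : EuclideanSpace ℝ (Fin n)) (r : ℝ) :
    FB (ball x r) μ ν ≤ a * ‖v‖ * (μ (ball x (r + ‖v‖))).toReal := by
  refine Real.sSup_le ?_ (by positivity)
  rintro t ⟨φ, hlip, hsupp, rfl⟩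
  have hcs : HasCompactSupport φ := .of_support_subset_isCompact (isCompact_closedBall x r)
    (hsupp.trans ball_subset_closedBall)
  have hφ := hlip.continuous.integrable_of_hasCompactSupport (μ := μ) hcs
  have hφv := (hlip.continuous.comp (continuous_add_const v)).integrable_of_hasCompactSupport
    (μ := μ) (hcs.comp_homeomorph (Homeomorph.addRight v))
  rw [hν, integral_sub_integral_convexCombination_map
    (measurableEmbedding_addRight v) hφ hφv ha0 ha1, abs_mul, abs_of_nonneg ha0,
    mul_assoc]
  gcongr
  simpa using hlip.abs_integral_sub_comp_add_le hsupp μ v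

/-- If `ν = (1−a)·μ + a·τ_v[μ]` is a convex combination of `μ` with its translate by `v`,
then `F_{B(x,r)}(μ,ν) ≤ a·|v|·μ(B(x,r+|v|))`. -/
theorem statement17 (n : ℕ) (μ : Measure (EuclideanSpace ℝ (Fin n)))
    [IsLocallyFiniteMeasure μ]
    (v : EuclideanSpace ℝ (Fin n)) (a : ℝ) (ha0 : 0 ≤ a) (ha1 : a ≤ 1)
    (ν : Measure (EuclideanSpace ℝ (Fin n)))
    (hν : ν = ENNReal.ofReal (1 - a) • μ
        + ENNReal.ofReal a • Measure.map (fun y => y + v) μ)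
    (x : EuclideanSpace ℝ (Fin n)) (r : ℝ) (hr : 0 < r) :
    FB (ball x r) μ ν ≤ a * ‖v‖ * (μ (ball x (r + ‖v‖))).toReal :=
  statement17_general n μ v a ha0 ha1 ν hν x r

end
end

section
/- Let L be an affine line in ℝ², x ∈ ℝ², r > 0 and h > 0. Then the length of the intersection of L with the closed annulus of center x and radii r and r+2h satisfies H¹(L ∩ (B̄(x,r+2h) \ B(x,r))) ≤ 2·√(4hr + 4h²). -/
open MeasureTheory Metric Set
open scoped ENNReal NNReal

/-!
Parametrize the line by arc length, `t ↦ t • u + p` with `‖u‖ = 1`. Then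
`dist (t • u + p) x ^ 2 = (t - a) ^ 2 + d` with `a = ⟪x - p, u⟫` and `d` the squared distance
from `x` to the line, so the parameters of points in the annulus `r ≤ dist ≤ R` form two
intervals `√(r² - d) ≤ |t - a| ≤ √(R² - d)`, of total length at most `2 √(R² - r²)`.
For `R = r + 2h` this is `2 √(4hr + 4h²)`.
-/

lemma Real.sqrt_sub_sqrt_le_sqrt_sub {α β : ℝ} (h : α ≤ β) : √β - √α ≤ √(β - α) := by
  have hα : α ≤ √α ^ 2 := by
    rcases le_total 0 α with hα | hα
    · rw [Real.sq_sqrt hα]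
    · exact hα.trans (sq_nonneg _)
  have hβα : √(β - α) ^ 2 = β - α := Real.sq_sqrt (sub_nonneg.mpr h)
  rw [sub_le_iff_le_add, Real.sqrt_le_iff]
  constructor
  · positivity
  · nlinarith [Real.sqrt_nonneg (β - α), Real.sqrt_nonneg α]

lemma Real.volume_setOf_sub_sq_mem_Icc_le (a α β : ℝ) :
    volume {t : ℝ | (t - a) ^ 2 ∈ Icc α β} ≤ ENNReal.ofReal (2 * √(β - α)) := by
  rcases lt_or_ge β α with hβα | hαβ
  · simp [Icc_eq_empty_of_lt hβα]
  have hsub : {t : ℝ | (t - a) ^ 2 ∈ Icc α β} ⊆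
      Icc (a - √β) (a - √α) ∪ Icc (a + √α) (a + √β) := by
    rintro t ⟨hαt, htβ⟩
    have hlow : √α ≤ |t - a| := by rw [← Real.sqrt_sq_eq_abs]; exact Real.sqrt_le_sqrt hαt
    have hup : |t - a| ≤ √β := by rw [← Real.sqrt_sq_eq_abs]; exact Real.sqrt_le_sqrt htβ
    rcases le_total a t with hat | hta
    · rw [abs_of_nonneg (sub_nonneg.mpr hat)] at hlow hup
      exact Or.inr ⟨by linarith, by linarith⟩
    · rw [abs_of_nonpos (sub_nonpos.mpr hta)] at hlow hup
      exact Or.inl ⟨by linarith, by linarith⟩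
  have hsqrt : √α ≤ √β := Real.sqrt_le_sqrt hαβ
  calc volume {t : ℝ | (t - a) ^ 2 ∈ Icc α β}
      ≤ volume (Icc (a - √β) (a - √α)) + volume (Icc (a + √α) (a + √β)) :=
        (measure_mono hsub).trans (measure_union_le _ _)
    _ = ENNReal.ofReal (2 * (√β - √α)) := by
        rw [Real.volume_Icc, Real.volume_Icc, ← ENNReal.ofReal_add] <;> ring_nf <;> linarith
    _ ≤ ENNReal.ofReal (2 * √(β - α)) := by
        gcongr
        exact Real.sqrt_sub_sqrt_le_sqrt_sub hαβ

section

variable {E : Type*} [NormedAddCommGroup E] [InnerProductSpace ℝ E]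

lemma dist_smul_add_sq {u : E} (hu : ‖u‖ = 1) (p x : E) (t : ℝ) :
    dist (t • u + p) x ^ 2 =
      (t - inner ℝ (x - p) u) ^ 2 + (‖x - p‖ ^ 2 - inner ℝ (x - p) u ^ 2) := by
  rw [dist_eq_norm, show t • u + p - x = t • u - (x - p) by abel, norm_sub_sq_real,
    norm_smul, hu, real_inner_smul_left, real_inner_comm, Real.norm_eq_abs,
    mul_one, sq_abs]
  ring

lemma isometry_smul_add {u : E} (hu : ‖u‖ = 1) (p : E) : Isometry fun t : ℝ ↦ t • u + p :=
  Isometry.of_dist_eq fun t s ↦ by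
    rw [dist_eq_norm, show t • u + p - (s • u + p) = (t - s) • u by module, norm_smul, hu,
      mul_one, Real.dist_eq, Real.norm_eq_abs]

lemma AffineSubspace.exists_eq_range_smul_add (L : AffineSubspace ℝ E)
    (hL : (L : Set E).Nonempty) (hdim : Module.finrank ℝ L.direction = 1) :
    ∃ p u : E, ‖u‖ = 1 ∧ (L : Set E) = range fun t : ℝ ↦ t • u + p := by
  obtain ⟨p, hp⟩ := hL
  obtain ⟨v, hv, hspan⟩ := finrank_eq_one_iff'.mp hdim
  have hv : ‖(v : E)‖ ≠ 0 := norm_ne_zero_iff.mpr (by simpa using hv)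
  refine ⟨p, ‖(v : E)‖⁻¹ • (v : E), by simp [norm_smul, hv], ?_⟩
  ext y
  constructor
  · intro hy
    obtain ⟨c, hc⟩ := hspan ⟨y -ᵥ p, AffineSubspace.vsub_mem_direction hy hp⟩
    refine ⟨c * ‖(v : E)‖, ?_⟩
    have hc : c • (v : E) = y - p := congrArg Subtype.val hc
    dsimp only
    rw [smul_smul, mul_assoc, mul_inv_cancel₀ hv, mul_one, hc, sub_add_cancel]
  · rintro ⟨t, rfl⟩
    exact AffineSubspace.vadd_mem_of_mem_direction
      (L.direction.smul_mem _ (L.direction.smul_mem _ v.2)) hp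

theorem AffineSubspace.hausdorffMeasure_inter_closedBall_diff_ball_le [MeasurableSpace E]
    [BorelSpace E] (L : AffineSubspace ℝ E) (hL : (L : Set E).Nonempty)
    (hdim : Module.finrank ℝ L.direction = 1) (x : E) {r : ℝ} (hr : 0 ≤ r) (R : ℝ) :
    μH[1] ((L : Set E) ∩ (closedBall x R \ ball x r)) ≤
      ENNReal.ofReal (2 * √(R ^ 2 - r ^ 2)) := by
  obtain ⟨p, u, hu, hLu⟩ := L.exists_eq_range_smul_add hL hdim
  set a := inner ℝ (x - p) u
  set d := ‖x - p‖ ^ 2 - a ^ 2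
  rw [hLu, ← image_preimage_eq_range_inter,
    (isometry_smul_add hu p).hausdorffMeasure_image (Or.inl zero_le_one), hausdorffMeasure_real]
  have hsub : (fun t : ℝ ↦ t • u + p) ⁻¹' (closedBall x R \ ball x r) ⊆
      {t | (t - a) ^ 2 ∈ Icc (r ^ 2 - d) (R ^ 2 - d)} := by
    rintro t ⟨htR, htr⟩
    rw [mem_closedBall] at htR
    rw [mem_ball, not_lt] at htr
    have := dist_smul_add_sq hu p x t
    constructor
    · nlinarith [pow_le_pow_left₀ hr htr 2]
    · nlinarith [pow_le_pow_left₀ dist_nonneg htR 2]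
  calc volume _ ≤ ENNReal.ofReal (2 * √(R ^ 2 - d - (r ^ 2 - d))) :=
        (measure_mono hsub).trans (Real.volume_setOf_sub_sq_mem_Icc_le a _ _)
    _ = ENNReal.ofReal (2 * √(R ^ 2 - r ^ 2)) := by rw [sub_sub_sub_cancel_right]

end

theorem statement19_general (L : AffineSubspace ℝ (EuclideanSpace ℝ (Fin 2)))
    (hL : (L : Set (EuclideanSpace ℝ (Fin 2))).Nonempty ∧
      Module.finrank ℝ L.direction = 1)
    (x : EuclideanSpace ℝ (Fin 2)) (r h : ℝ) (hr : 0 < r) :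
    μH[(1:ℝ)] ((L : Set (EuclideanSpace ℝ (Fin 2))) ∩
        (closedBall x (r + 2 * h) \ ball x r)) ≤
      ENNReal.ofReal (2 * Real.sqrt (4 * h * r + 4 * h ^ 2)) := by
  convert L.hausdorffMeasure_inter_closedBall_diff_ball_le hL.1 hL.2 x hr.le (r + 2 * h) using 4
  ring

/-- The length of the intersection of an affine line in `ℝ²` with the closed annulus of
center `x` and radii `r` and `r+2h` is at most `2·√(4hr + 4h²)`. -/
theorem statement19 (L : AffineSubspace ℝ (EuclideanSpace ℝ (Fin 2)))
    (hL : (L : Set (EuclideanSpace ℝ (Fin 2))).Nonempty ∧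
      Module.finrank ℝ L.direction = 1)
    (x : EuclideanSpace ℝ (Fin 2)) (r h : ℝ) (hr : 0 < r) (hh : 0 < h) :
    μH[(1:ℝ)] ((L : Set (EuclideanSpace ℝ (Fin 2))) ∩
        (closedBall x (r + 2 * h) \ ball x r)) ≤
      ENNReal.ofReal (2 * Real.sqrt (4 * h * r + 4 * h ^ 2)) :=
  statement19_general L hL x r h hr
end
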